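/- Let C be a Krull–Schmidt abelian category with enough projectives and let R be an additive full subcategory of C. Then R is a resolving subcategory of C if and only if all of the following hold: (R'1) every projective object of C belongs to R; (R'2) for every short exact sequence 0 → X → E → Y → 0 with X and Y indecomposable objects of R, one has E in R; and (R'3) for every short exact sequence 0 → K → M → Y → 0 with M in R and Y an indecomposable object of R, one has K in R. -/

import Mathlib

open CategoryTheory Limits

attribute [local instance] CategoryTheory.Abelian.hasFiniteBiproducts

universe v u

variable {C : Type u} [Category.{v} C] [Abelian C]

/-- A class of objects of `C` is an *additive subcategory* if it is closed under
isomorphisms, finite direct sums and direct summands. -/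
def IsAdditiveSubcat (P : C → Prop) : Prop :=
  (∀ ⦃X Y : C⦄, (X ≅ Y) → P X → P Y) ∧
  (∀ ⦃X Y : C⦄, P X → P Y → P (X ⊞ Y)) ∧
  (∀ ⦃X Y : C⦄, P (X ⊞ Y) → P X ∧ P Y)

/-- A class of objects `P` *generates* `C` if every object of `C` admits an epimorphism
from an object of `P`. -/
def GeneratesCat (P : C → Prop) : Prop :=
  ∀ X : C, ∃ (G : C) (f : G ⟶ X), P G ∧ Epi f

/-- `P` is closed under extensions: for every short exact sequence
`0 → A → E → B → 0` with `A, B` in `P`, `E` is in `P`. -/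
def ClosedUnderExtensions (P : C → Prop) : Prop :=
  ∀ S : ShortComplex C, S.ShortExact → P S.X₁ → P S.X₃ → P S.X₂

/-- `P` is closed under kernels of epimorphisms: for every short exact sequence
`0 → K → M → N → 0` with `M, N` in `P`, `K` is in `P`. -/
def ClosedUnderKernelsOfEpis (P : C → Prop) : Prop :=
  ∀ S : ShortComplex C, S.ShortExact → P S.X₂ → P S.X₃ → P S.X₁

/-- A *resolving subcategory* of `C`: an additive class of objects which generates `C`,
is closed under extensions and closed under kernels of epimorphisms. -/
def IsResolving (P : C → Prop) : Prop :=
  IsAdditiveSubcat P ∧ GeneratesCat P ∧ ClosedUnderExtensions P ∧ ClosedUnderKernelsOfEpis P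

/-- The *resolving closure* of a class of objects: the intersection of all resolving
subcategories containing it (i.e. the smallest such subcategory). -/
def ResolvingClosure (X : C → Prop) : C → Prop :=
  fun A => ∀ P : C → Prop, IsResolving P → (∀ B, X B → P B) → P A

/-- The *additive closure* of a class of objects: the intersection of all additive
subcategories containing it. -/
def AdditiveClosure (P : C → Prop) : C → Prop :=
  fun A => ∀ Q : C → Prop, IsAdditiveSubcat Q → (∀ B, P B → Q B) → Q A

/-- `C` is a *Krull–Schmidt* category: every object is isomorphic to a finite direct sum
of indecomposable objects with local endomorphism rings. -/
def IsKrullSchmidtCat (C : Type u) [Category.{v} C] [Abelian C] : Prop :=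
  ∀ X : C, ∃ (n : ℕ) (f : Fin n → C),
    (∀ i, Indecomposable (f i) ∧ IsLocalRing (End (f i))) ∧ Nonempty (X ≅ ⨁ f)

/-- `Y` admits at most `p₀` indecomposable direct summands. -/
def AtMostIndecSummands (p₀ : ℕ) (Y : C) : Prop :=
  ∃ (n : ℕ) (f : Fin n → C), n ≤ p₀ ∧ (∀ i, Indecomposable (f i)) ∧ Nonempty (Y ≅ ⨁ f)

/-- Condition `(Mid)_{p₀}`: for every short exact sequence `0 → X → Y → Z → 0` with `X`, `Z`
indecomposable, the middle object `Y` admits at most `p₀` indecomposable direct summands. -/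
def SatisfiesMid (C : Type u) [Category.{v} C] [Abelian C] (p₀ : ℕ) : Prop :=
  ∀ S : ShortComplex C, S.ShortExact → Indecomposable S.X₁ → Indecomposable S.X₃ →
    AtMostIndecSummands p₀ S.X₂


/-!
A resolving subcategory contains the projectives because an epimorphism from an object of `R`
onto a projective splits. Conversely, both closure properties are proved by induction on the
number of indecomposable summands. For `0 → K → M → Y₁ ⊞ Y₂ → 0`, the kernel `K'` of
`M → Y₂` sits in `0 → K → K' → Y₁ → 0` and `0 → K' → M → Y₂ → 0`; this gives closure under
kernels of epimorphisms from `(R'3)`, and reduces extensions to those with indecomposable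
quotient `Z`. For `0 → X₁ ⊞ X₂ → E → Z → 0` the quotients `E / X₂` and `E / X₁` are extensions
of `Z` by `X₁` and by `X₂`, so they lie in `R` by `(R'2)` and induction, and
`0 → E → E / X₂ ⊞ E / X₁ → Z → 0` exhibits `E` as a kernel of an epimorphism.
-/

open ShortComplex

noncomputable def biproductFinSuccIso {n : ℕ} (f : Fin (n + 1) → C) :
    ⨁ f ≅ f 0 ⊞ ⨁ fun i : Fin n => f i.succ where
  hom := biprod.lift (biproduct.π f 0) (biproduct.lift fun i => biproduct.π f i.succ)
  inv := biprod.desc (biproduct.ι f 0) (biproduct.desc fun i => biproduct.ι f i.succ)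
  hom_inv_id := by
    rw [biprod.lift_desc, biproduct.lift_desc, ← biproduct.total, Fin.sum_univ_succ]
  inv_hom_id := by
    ext <;> simp [biproduct.ι_π, Fin.succ_ne_zero, (Fin.succ_ne_zero _).symm]

def HasIndecomposableDecompositions (C : Type u) [Category.{v} C] [Abelian C] : Prop :=
  ∀ X : C, ∃ (n : ℕ) (f : Fin n → C), (∀ i, Indecomposable (f i)) ∧ Nonempty (X ≅ ⨁ f)

theorem IsKrullSchmidtCat.hasIndecomposableDecompositions (hKS : IsKrullSchmidtCat C) :
    HasIndecomposableDecompositions C := fun X => by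
  obtain ⟨n, f, hf, e⟩ := hKS X
  exact ⟨n, f, fun i => (hf i).1, e⟩

theorem HasIndecomposableDecompositions.induction (hdec : HasIndecomposableDecompositions C)
    {P : C → Prop} (iso : ∀ ⦃X Y : C⦄, (X ≅ Y) → P X → P Y) (zero : ∀ X : C, IsZero X → P X)
    (biprod : ∀ X₁ X₂ : C, Indecomposable X₁ → P X₂ → P (X₁ ⊞ X₂)) (X : C) : P X := by
  obtain ⟨n, f, hf, ⟨e⟩⟩ := hdec X
  refine iso e.symm ?_
  clear e
  induction n with
  | zero => exact zero _ (by rw [IsZero.iff_id_eq_zero]; ext j; exact j.elim0)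
  | succ n ih =>
    exact iso (biproductFinSuccIso f).symm (biprod _ _ (hf 0) (ih _ fun i => hf i.succ))

/-- `0 → X → ker (g ≫ p) → ker p → 0`, with `ker p` given by `i`. -/
theorem shortExact_lift_kernel_comp {X E Y Y₁ Y₂ : C} {f : X ⟶ E} {g : E ⟶ Y} {i : Y₁ ⟶ Y}
    {p : Y ⟶ Y₂} {hfg : f ≫ g = 0} {hip : i ≫ p = 0} [Mono i] (hS : (mk f g hfg).ShortExact)
    (hT : (mk i p hip).Exact) :
    (mk (kernel.lift (g ≫ p) f (by simp [reassoc_of% hfg]))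
      (hT.lift (kernel.ι (g ≫ p) ≫ g) (by simp))
      (by simp [← cancel_mono i, hT.lift_f, hfg])).ShortExact := by
  have := hS.mono_f
  have := hS.epi_g
  have lift_i : hT.lift (kernel.ι (g ≫ p) ≫ g) (by simp) ≫ i = kernel.ι (g ≫ p) ≫ g :=
    hT.lift_f _ _
  refine .mk' ?_ (mono_of_mono_fac (kernel.lift_ι _ _ _)) ?_
  · rw [exact_iff_exact_up_to_refinements]
    intro T k hk
    replace hk : (k ≫ kernel.ι (g ≫ p)) ≫ g = 0 := by
      simpa [← cancel_mono i, lift_i] using hk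
    obtain ⟨T', π, _, x, hx⟩ := hS.exact.exact_up_to_refinements _ hk
    exact ⟨T', π, inferInstance, x, by simpa [← cancel_mono (kernel.ι (g ≫ p))] using hx⟩
  · rw [epi_iff_surjective_up_to_refinements]
    intro T y
    obtain ⟨T', π, _, x, hx⟩ := surjective_up_to_refinements_of_epi g (y ≫ i)
    refine ⟨T', π, inferInstance, kernel.lift _ x (by simp [← reassoc_of% hx, hip]), ?_⟩
    simp [← cancel_mono i, lift_i, hx]

/-- `0 → coker i → coker (i ≫ f) → Z → 0`, with `coker i` given by `p`. -/
theorem shortExact_desc_cokernel_comp {A X B E Z : C} {i : A ⟶ X} {p : X ⟶ B} {f : X ⟶ E}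
    {g : E ⟶ Z} {hip : i ≫ p = 0} {hfg : f ≫ g = 0} [Epi p] (hT : (mk i p hip).Exact)
    (hS : (mk f g hfg).ShortExact) :
    (mk (hT.desc (f ≫ cokernel.π (i ≫ f)) (by rw [← Category.assoc, cokernel.condition]))
      (cokernel.desc (i ≫ f) g (by simp [hfg]))
      (by simp [← cancel_epi p, hT.g_desc_assoc, hfg])).ShortExact := by
  have := hS.mono_f
  have := hS.epi_g
  have p_desc : p ≫ hT.desc (f ≫ cokernel.π (i ≫ f))
      (by rw [← Category.assoc, cokernel.condition]) = f ≫ cokernel.π (i ≫ f) :=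
    hT.g_desc _ _
  refine .mk' ?_ ?_ (epi_of_epi_fac (cokernel.π_desc _ _ _))
  · rw [exact_iff_exact_up_to_refinements]
    intro T q hq
    obtain ⟨T', π, _, x, hx⟩ := surjective_up_to_refinements_of_epi (cokernel.π (i ≫ f)) q
    have hxg : x ≫ g = 0 := by
      simpa [reassoc_of% hx] using π ≫= hq
    obtain ⟨T'', ρ, _, y, hy⟩ := hS.exact.exact_up_to_refinements x hxg
    refine ⟨T'', ρ ≫ π, epi_comp _ _, y ≫ p, ?_⟩
    simp at hy ⊢
    simp [hx, reassoc_of% hy, p_desc]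
  · refine Preadditive.mono_of_cancel_zero _ fun {T} t ht => ?_
    obtain ⟨T', π, _, x, hx⟩ := surjective_up_to_refinements_of_epi p t
    replace ht : t ≫ hT.desc _ _ = 0 := ht
    have hxf : (x ≫ f) ≫ cokernel.π (i ≫ f) = 0 := by
      rw [Category.assoc, ← p_desc, ← reassoc_of% hx, ht, comp_zero]
    obtain ⟨T'', ρ, _, y, hy⟩ := (exact_cokernel (i ≫ f)).exact_up_to_refinements _ hxf
    have hxi : ρ ≫ x = y ≫ i := by simpa [← cancel_mono f] using hy
    have : ρ ≫ π ≫ t = 0 := by rw [hx, reassoc_of% hxi]; simp [hip]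
    exact zero_of_epi_comp π (zero_of_epi_comp ρ this)

section MayerVietoris

variable {X₁ X₂ E Z : C} {f : X₁ ⊞ X₂ ⟶ E} {g : E ⟶ Z} {hfg : f ≫ g = 0}

theorem isPushout_cokernel_inr_inl (hS : (mk f g hfg).ShortExact) :
    IsPushout (cokernel.π (biprod.inr ≫ f)) (cokernel.π (biprod.inl ≫ f))
      (cokernel.desc (biprod.inr ≫ f) g (by simp [hfg]))
      (cokernel.desc (biprod.inl ≫ f) g (by simp [hfg])) := by
  have := hS.epi_g
  have hl : biprod.inl ≫ f ≫ cokernel.π (biprod.inl ≫ f) = 0 := by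
    rw [← Category.assoc, cokernel.condition]
  have hr : biprod.inr ≫ f ≫ cokernel.π (biprod.inr ≫ f) = 0 := by
    rw [← Category.assoc, cokernel.condition]
  refine .of_isColimit (PushoutCocone.IsColimit.mk (by simp)
    (fun s => hS.exact.desc (cokernel.π (biprod.inr ≫ f) ≫ s.inl) ?_) (fun s => ?_) (fun s => ?_)
    (fun s m hm _ => ?_))
  · ext
    · simp [s.condition, reassoc_of% hl]
    · simp [reassoc_of% hr]
  · simp [← cancel_epi (cokernel.π (biprod.inr ≫ f)), hS.exact.g_desc]
  · simp [← cancel_epi (cokernel.π (biprod.inl ≫ f)), hS.exact.g_desc, s.condition]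
  · simp [← cancel_epi g, hS.exact.g_desc, ← hm]

/-- `0 → E → E / X₂ ⊞ E / X₁ → Z → 0`. -/
theorem shortExact_mayerVietoris (hS : (mk f g hfg).ShortExact) :
    (isPushout_cokernel_inr_inl hS).shortComplex.ShortExact := by
  have := hS.mono_f
  refine .mk' (isPushout_cokernel_inr_inl hS).exact_shortComplex ?_
    (isPushout_cokernel_inr_inl hS).epi_shortComplex_g
  refine Preadditive.mono_of_cancel_zero _ fun {T} (x : T ⟶ E) hx => ?_
  replace hx : x ≫ biprod.lift (cokernel.π (biprod.inr ≫ f)) (-cokernel.π (biprod.inl ≫ f)) = 0 :=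
    hx
  have hx₁ : x ≫ cokernel.π (biprod.inr ≫ f) = 0 := by simpa using hx =≫ biprod.fst
  have hx₂ : x ≫ cokernel.π (biprod.inl ≫ f) = 0 := by simpa using hx =≫ biprod.snd
  obtain ⟨T', ρ, _, y, hy⟩ := (exact_cokernel (biprod.inr ≫ f)).exact_up_to_refinements x hx₁
  have hy₂ : (y ≫ biprod.inr ≫ f) ≫ cokernel.π (biprod.inl ≫ f) = 0 := by
    rw [← hy, Category.assoc, hx₂, comp_zero]
  obtain ⟨T'', ρ', _, z, hz⟩ := (exact_cokernel (biprod.inl ≫ f)).exact_up_to_refinements _ hy₂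
  have hyz : ρ' ≫ y ≫ biprod.inr = z ≫ biprod.inl := by
    simpa [← cancel_mono f] using hz
  have hy0 : ρ' ≫ y = 0 := by simpa using hyz =≫ biprod.snd
  have : ρ' ≫ ρ ≫ x = 0 := by rw [hy, reassoc_of% hy0, zero_comp]
  exact zero_of_epi_comp ρ (zero_of_epi_comp ρ' this)

end MayerVietoris

theorem exact_biprod_inr_fst (X₁ X₂ : C) :
    (mk (biprod.inr : X₂ ⟶ X₁ ⊞ X₂) biprod.fst (by simp)).Exact :=
  exact_of_f_is_kernel _ (biprod.isKernelFstKernelFork X₁ X₂)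

theorem shortExact_comp_iso {S : ShortComplex C} (hS : S.ShortExact) {Y : C} (e : S.X₃ ≅ Y) :
    (mk S.f (S.g ≫ e.hom) (by simp)).ShortExact :=
  shortExact_of_iso (S₁ := S) (ShortComplex.isoMk (Iso.refl _) (Iso.refl _) e) hS

theorem shortExact_iso_comp {S : ShortComplex C} (hS : S.ShortExact) {X : C} (e : S.X₁ ≅ X) :
    (mk (e.inv ≫ S.f) S.g (by simp)).ShortExact :=
  shortExact_of_iso (S₁ := S) (ShortComplex.isoMk e (Iso.refl _) (Iso.refl _)) hS

theorem shortExact_kernel {X Y : C} (p : X ⟶ Y) [Epi p] :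
    (mk (kernel.ι p) p (kernel.condition p)).ShortExact :=
  { exact := exact_kernel p }

theorem IsResolving.mem_of_projective {R : C → Prop} (hR : IsResolving R) (X : C)
    [Projective X] : R X := by
  obtain ⟨G, p, hG, _⟩ := hR.2.1 X
  exact (hR.1.2.2 (hR.1.1 (shortExact_kernel p).splittingOfProjective.isoBinaryBiproduct hG)).2

section Closure

variable {R : C → Prop}

theorem closedUnderKernelsOfEpis_of_indecomposable
    (hdec : HasIndecomposableDecompositions C) (hR : IsAdditiveSubcat R)
    (h3 : ∀ S : ShortComplex C, S.ShortExact → R S.X₂ → R S.X₃ → Indecomposable S.X₃ → R S.X₁) :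
    ClosedUnderKernelsOfEpis R := by
  suffices ∀ Y : C, ∀ S : ShortComplex C, S.ShortExact → (S.X₃ ≅ Y) → R S.X₂ → R S.X₃ → R S.X₁
    from fun S hS => this _ S hS (Iso.refl _)
  refine hdec.induction (fun Y Y' e hY S hS e' => hY S hS (e' ≪≫ e.symm))
    (fun Y hY S hS e h₂ _ => ?_) (fun Y₁ Y₂ hY₁ hY₂ S hS e h₂ h₃ => ?_)
  · have := hS.isIso_f_iff.2 (hY.of_iso e)
    exact hR.1 (asIso S.f).symm h₂
  · obtain ⟨hRY₁, hRY₂⟩ := hR.2.2 (hR.1 e h₃)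
    let p : S.X₂ ⟶ Y₂ := (S.g ≫ e.hom) ≫ biprod.snd
    have := hS.epi_g
    have hK : R (kernel p) := hY₂ _ (shortExact_kernel p) (Iso.refl _) h₂ hRY₂
    have hT := shortExact_lift_kernel_comp (shortExact_comp_iso hS e)
      (Splitting.ofHasBinaryBiproduct Y₁ Y₂).exact
    exact (h3 _ hT hK hRY₁ hY₁ :)

theorem mem_X₂_of_shortExact_of_indecomposable_X₃
    (hdec : HasIndecomposableDecompositions C) (hR : IsAdditiveSubcat R)
    (h2 : ∀ S : ShortComplex C, S.ShortExact →
      R S.X₁ → Indecomposable S.X₁ → R S.X₃ → Indecomposable S.X₃ → R S.X₂)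
    (hker : ClosedUnderKernelsOfEpis R) (S : ShortComplex C) (hS : S.ShortExact) (h₁ : R S.X₁)
    (h₃ : R S.X₃) (hZ : Indecomposable S.X₃) : R S.X₂ := by
  suffices ∀ X : C, ∀ S : ShortComplex C, S.ShortExact → (S.X₁ ≅ X) → R S.X₁ → R S.X₃ →
      Indecomposable S.X₃ → R S.X₂ from this _ S hS (Iso.refl _) h₁ h₃ hZ
  refine hdec.induction (fun X X' e hX S hS e' => hX S hS (e' ≪≫ e.symm))
    (fun X hX S hS e _ h₃ _ => ?_) (fun X₁ X₂ hX₁ hX₂ S hS e h₁ h₃ hZ => ?_)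
  · have := hS.isIso_g_iff.2 (hX.of_iso e)
    exact hR.1 (asIso S.g).symm h₃
  · obtain ⟨hRX₁, hRX₂⟩ := hR.2.2 (hR.1 e h₁)
    have hS' := shortExact_iso_comp hS e
    have hE₁ := h2 _ (shortExact_desc_cokernel_comp (exact_biprod_inr_fst X₁ X₂) hS')
      hRX₁ hX₁ h₃ hZ
    have hE₂ := hX₂ _ (shortExact_desc_cokernel_comp
      (Splitting.ofHasBinaryBiproduct X₁ X₂).exact hS') (Iso.refl _) hRX₂ h₃ hZ
    exact (hker _ (shortExact_mayerVietoris hS') (hR.2.1 hE₁ hE₂) h₃ :)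

theorem closedUnderExtensions_of_indecomposable
    (hdec : HasIndecomposableDecompositions C) (hR : IsAdditiveSubcat R)
    (h2 : ∀ S : ShortComplex C, S.ShortExact →
      R S.X₁ → Indecomposable S.X₁ → R S.X₃ → Indecomposable S.X₃ → R S.X₂)
    (hker : ClosedUnderKernelsOfEpis R) : ClosedUnderExtensions R := by
  suffices ∀ Z : C, ∀ S : ShortComplex C, S.ShortExact → (S.X₃ ≅ Z) → R S.X₁ → R S.X₃ → R S.X₂
    from fun S hS => this _ S hS (Iso.refl _)
  refine hdec.induction (fun Z Z' e hZ S hS e' => hZ S hS (e' ≪≫ e.symm))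
    (fun Z hZ S hS e h₁ _ => ?_) (fun Z₁ Z₂ hZ₁ hZ₂ S hS e h₁ h₃ => ?_)
  · have := hS.isIso_f_iff.2 (hZ.of_iso e)
    exact hR.1 (asIso S.f) h₁
  · obtain ⟨hRZ₁, hRZ₂⟩ := hR.2.2 (hR.1 e h₃)
    let p : S.X₂ ⟶ Z₂ := (S.g ≫ e.hom) ≫ biprod.snd
    have := hS.epi_g
    have hT := shortExact_lift_kernel_comp (shortExact_comp_iso hS e)
      (Splitting.ofHasBinaryBiproduct Z₁ Z₂).exact
    have hK : R (kernel p) := mem_X₂_of_shortExact_of_indecomposable_X₃ hdec hR h2 hker _ hT h₁ hRZ₁ hZ₁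
    exact (hZ₂ _ (shortExact_kernel p) (Iso.refl _) hK hRZ₂ :)

end Closure

/-- In a Krull–Schmidt abelian category with enough projectives, an additive
subcategory is resolving if and only if it contains the projectives (`R'1`), is closed under
extensions with indecomposable outer terms (`R'2`), and is closed under kernels of epimorphisms
onto indecomposable objects (`R'3`). -/
theorem isResolving_iff_restricted_conditions
    (C : Type u) [Category.{v} C] [Abelian C] [EnoughProjectives C]
    (hKS : IsKrullSchmidtCat C) (R : C → Prop) (hR : IsAdditiveSubcat R) :
    IsResolving R ↔
      ((∀ X : C, Projective X → R X) ∧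
       (∀ S : ShortComplex C, S.ShortExact →
          R S.X₁ → Indecomposable S.X₁ → R S.X₃ → Indecomposable S.X₃ → R S.X₂) ∧
       (∀ S : ShortComplex C, S.ShortExact → R S.X₂ → R S.X₃ → Indecomposable S.X₃ →
          R S.X₁)) := by
  constructor
  · intro hRes
    exact ⟨fun X _ => hRes.mem_of_projective X, fun S hS h₁ _ h₃ _ => hRes.2.2.1 S hS h₁ h₃,
      fun S hS h₂ h₃ _ => hRes.2.2.2 S hS h₂ h₃⟩
  · rintro ⟨h1, h2, h3⟩
    have hdec := hKS.hasIndecomposableDecompositions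
    have hker := closedUnderKernelsOfEpis_of_indecomposable hdec hR h3
    exact ⟨hR, fun X => ⟨_, Projective.π X, h1 _ inferInstance, inferInstance⟩,
      closedUnderExtensions_of_indecomposable hdec hR h2 hker, hker⟩
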